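/- Fix d ≥ 1. Let a^{(1)}, …, a^{(d²)} be d×d complex matrices whose τ-tensor is diagonal with nonnegative real diagonal entries λ_1, …, λ_{d²}, and let θ_1, …, θ_{d²} ∈ ℝ be arbitrary phases. Then there exists a d²×d² complex unitary matrix U such that, with b^{(l)} = ∑_{k=1}^{d²} U_{lk} a^{(k)}, every member of the new family has the same G-concurrence: d·|det b^{(l)}|^{2/d} = (1/d²) · | ∑_{k=1}^{d²} λ_k e^{iθ_k} |^{2/d} for every l ∈ {1, …, d²}. -/

import Mathlib

/-!
Expanding `det (∑ₖ uₖ a⁽ᵏ⁾)` multilinearly in the rows and symmetrizing over `S_d` turns it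
into `d^{-d/2} ∑_{k₁…k_d} u_{k₁} ⋯ u_{k_d} τ_{k₁…k_d}`; for a diagonal τ-tensor this is
`d^{-d/2} ∑ₖ uₖ^d λₖ`. So it suffices to find a unitary `U` with `U_{lk}^d = d^{-d} e^{iθₖ}`
for all `l, k`: the two-dimensional Fourier matrix on `ℤ_d × ℤ_d`, whose entries are `d⁻¹`
times `d`-th roots of unity, followed by the phases `e^{iθₖ/d}`.
-/

open scoped BigOperators Matrix

/-- The τ-tensor of a family `a : Fin m → Matrix (Fin d) (Fin d) ℂ`:
`τ^a_{k₁…k_d} = (d^{d/2} / d!) ∑_{σ ∈ S_d} det (M(σ))`, where the `i`-th row of `M(σ)`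
is the `i`-th row of `a (k (σ i))`. -/
noncomputable def tauTensor (d m : ℕ) (a : Fin m → Matrix (Fin d) (Fin d) ℂ)
    (k : Fin d → Fin m) : ℂ :=
  (((Real.sqrt d ^ d / d.factorial : ℝ)) : ℂ) *
    ∑ σ : Equiv.Perm (Fin d), (Matrix.of fun i j => a (k (σ i)) i j).det

open scoped Kronecker

theorem Matrix.det_sum_smul {R n ι : Type*} [CommRing R] [Fintype n] [DecidableEq n]
    [Fintype ι] (u : ι → R) (a : ι → Matrix n n R) :
    (∑ k, u k • a k).det
      = ∑ f : n → ι, (∏ i, u (f i)) * (of fun i j => a (f i) i j).det := by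
  have rows : ∑ k, u k • a k = fun i => ∑ k, u k • a k i := by
    ext i j
    simp [Matrix.sum_apply]
  change detRowAlternating _ = _
  rw [rows, ← AlternatingMap.coe_multilinearMap, MultilinearMap.map_sum]
  refine Finset.sum_congr rfl fun f _ => ?_
  rw [MultilinearMap.map_smul_univ, smul_eq_mul]
  rfl

theorem Fintype.card_perm_mul_sum_mul_eq_sum_mul_sum_perm {R n ι : Type*} [CommSemiring R]
    [Fintype n] [DecidableEq n] [Fintype ι] (P D : (n → ι) → R)
    (hP : ∀ (σ : Equiv.Perm n) f, P (f ∘ σ) = P f) :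
    (Fintype.card (Equiv.Perm n) : R) * ∑ f, P f * D f
      = ∑ f, P f * ∑ σ : Equiv.Perm n, D (f ∘ σ) := by
  calc (Fintype.card (Equiv.Perm n) : R) * ∑ f, P f * D f
      = ∑ _σ : Equiv.Perm n, ∑ f, P f * D f := by
        rw [Finset.sum_const, Finset.card_univ, nsmul_eq_mul]
    _ = ∑ σ : Equiv.Perm n, ∑ f, P f * D (f ∘ σ) := by
        refine Finset.sum_congr rfl fun σ _ => ?_
        rw [← (Equiv.arrowCongr σ.symm (Equiv.refl ι)).sum_comp]
        refine Finset.sum_congr rfl fun f _ => ?_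
        change P (f ∘ σ) * D (f ∘ σ) = _
        rw [hP]
    _ = ∑ f, P f * ∑ σ : Equiv.Perm n, D (f ∘ σ) := by
        rw [Finset.sum_comm]
        simp_rw [Finset.mul_sum]

theorem Fintype.sum_prod_mul_eq_sum_pow_mul {R n ι : Type*} [CommSemiring R] [Fintype n]
    [DecidableEq n] [Nonempty n] [Fintype ι] (u : ι → R) (T : (n → ι) → R)
    (hT : ∀ f, (∃ i j, f i ≠ f j) → T f = 0) :
    ∑ f : n → ι, (∏ i, u (f i)) * T f = ∑ c, u c ^ Fintype.card n * T (fun _ => c) := by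
  symm
  refine Fintype.sum_of_injective (fun c (_ : n) => c) Function.const_injective _ _
    (fun f hf => ?_) (fun c => by rw [Finset.prod_const, Finset.card_univ])
  rw [hT f, mul_zero]
  by_contra! hconst
  exact hf ⟨f (Classical.arbitrary n), funext fun i => hconst _ _⟩

theorem sqrt_pow_mul_det_sum_smul_eq_sum_mul_tauTensor {d m : ℕ}
    (a : Fin m → Matrix (Fin d) (Fin d) ℂ) (u : Fin m → ℂ) :
    ((√d ^ d : ℝ) : ℂ) * (∑ k, u k • a k).det
      = ∑ f : Fin d → Fin m, (∏ i, u (f i)) * tauTensor d m a f := by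
  have sym := Fintype.card_perm_mul_sum_mul_eq_sum_mul_sum_perm (fun f => ∏ i, u (f i))
    (fun f => (Matrix.of fun i j => a (f i) i j).det) fun σ f => Equiv.prod_comp σ (u ∘ f)
  simp only [Fintype.card_perm, Fintype.card_fin, Function.comp_apply] at sym
  simp only [tauTensor, mul_left_comm _ ((√d ^ d / d.factorial : ℝ) : ℂ), ← Finset.mul_sum]
  rw [Matrix.det_sum_smul, ← sym, ← mul_assoc]
  congr 1
  rw [Complex.ofReal_div, Complex.ofReal_natCast,
    div_mul_cancel₀ _ (Nat.cast_ne_zero.2 d.factorial_ne_zero)]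

theorem det_sum_smul_eq_of_tauTensor_diagonal {d m : ℕ} (hd : d ≠ 0)
    (a : Fin m → Matrix (Fin d) (Fin d) ℂ) (lam : Fin m → ℂ)
    (hdiag : ∀ c, tauTensor d m a (fun _ => c) = lam c)
    (hoff : ∀ k : Fin d → Fin m, (∃ i j, k i ≠ k j) → tauTensor d m a k = 0)
    (u : Fin m → ℂ) :
    (∑ k, u k • a k).det = ((√d ^ d : ℝ) : ℂ)⁻¹ * ∑ c, u c ^ d * lam c := by
  have : NeZero d := ⟨hd⟩
  have hsqrt : ((√d ^ d : ℝ) : ℂ) ≠ 0 := by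
    norm_cast; positivity
  rw [eq_inv_mul_iff_mul_eq₀ hsqrt, sqrt_pow_mul_det_sum_smul_eq_sum_mul_tauTensor,
    Fintype.sum_prod_mul_eq_sum_pow_mul _ _ hoff, Fintype.card_fin]
  simp_rw [hdiag]

namespace Matrix

variable {m n α : Type*} [Fintype m] [DecidableEq m] [Fintype n] [DecidableEq n]
  [CommRing α] [StarRing α]

theorem submatrix_equiv_mem_unitaryGroup {U : Matrix n n α} (hU : U ∈ unitaryGroup n α)
    (e : m ≃ n) : U.submatrix e e ∈ unitaryGroup m α := by
  rw [mem_unitaryGroup_iff, star_eq_conjTranspose] at hU ⊢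
  rw [conjTranspose_submatrix, submatrix_mul_equiv, hU, submatrix_one_equiv]

theorem diagonal_mem_unitaryGroup {v : n → α} (hv : ∀ i, v i * star (v i) = 1) :
    diagonal v ∈ unitaryGroup n α := by
  rw [mem_unitaryGroup_iff, star_eq_conjTranspose, diagonal_conjTranspose, diagonal_mul_diagonal,
    ← diagonal_one]
  exact congrArg diagonal (funext hv)

end Matrix

def fourierMatrix (ζ : ℂ) (d : ℕ) : Matrix (Fin d) (Fin d) ℂ :=
  Matrix.of fun j k => ζ ^ ((j : ℕ) * k)

theorem fourierMatrix_mul_conjTranspose {ζ : ℂ} {d : ℕ} (hζ : IsPrimitiveRoot ζ d) :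
    fourierMatrix ζ d * (fourierMatrix ζ d)ᴴ = (d : ℂ) • 1 := by
  ext j j'
  have hd : d ≠ 0 := Fin.pos_iff_nonempty.2 ⟨j⟩ |>.ne'
  have hζ1 : ‖ζ‖ = 1 := hζ.norm'_eq_one hd
  set x := ζ ^ (j : ℕ) * (ζ ^ (j' : ℕ))⁻¹
  have hterm : ∀ k : Fin d,
      fourierMatrix ζ d j k * star (fourierMatrix ζ d j' k) = x ^ (k : ℕ) := fun k => by
    rw [fourierMatrix, Matrix.of_apply, Matrix.of_apply, RCLike.star_def, ← Complex.inv_eq_conj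
      (by rw [norm_pow, hζ1, one_pow]), pow_mul, pow_mul, ← inv_pow, ← mul_pow]
  simp only [Matrix.mul_apply, Matrix.conjTranspose_apply, hterm, Matrix.smul_apply,
    Matrix.one_apply, smul_eq_mul, mul_ite, mul_one, mul_zero]
  rw [Fin.sum_univ_eq_sum_range (x ^ ·)]
  split_ifs with hjj'
  · simp [x, hjj', pow_ne_zero _ (hζ.ne_zero hd)]
  · have hx1 : x ≠ 1 := by
      rw [Ne, mul_inv_eq_one₀ (pow_ne_zero _ (hζ.ne_zero hd))]
      exact fun h => hjj' (Fin.ext (hζ.pow_inj j.2 j'.2 h))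
    have hxd : x ^ d = 1 := by
      rw [mul_pow, inv_pow, pow_right_comm ζ j, pow_right_comm ζ j', hζ.pow_eq_one, one_pow,
        one_pow, inv_one, one_mul]
    rw [geom_sum_eq hx1, hxd, sub_self, zero_div]

theorem inv_sqrt_smul_fourierMatrix_mem_unitaryGroup {ζ : ℂ} {d : ℕ}
    (hζ : IsPrimitiveRoot ζ d) :
    ((√d : ℝ) : ℂ)⁻¹ • fourierMatrix ζ d ∈ Matrix.unitaryGroup (Fin d) ℂ := by
  obtain rfl | hd := eq_or_ne d 0
  · rw [Matrix.mem_unitaryGroup_iff]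
    exact Subsingleton.elim _ _
  rw [Matrix.mem_unitaryGroup_iff, Matrix.star_eq_conjTranspose, Matrix.conjTranspose_smul,
    Matrix.smul_mul, Matrix.mul_smul, fourierMatrix_mul_conjTranspose hζ, smul_smul, smul_smul]
  convert one_smul ℂ (1 : Matrix (Fin d) (Fin d) ℂ)
  rw [RCLike.star_def, map_inv₀, Complex.conj_ofReal, ← mul_inv, ← Complex.ofReal_mul,
    Real.mul_self_sqrt (Nat.cast_nonneg d), Complex.ofReal_natCast,
    inv_mul_cancel₀ (Nat.cast_ne_zero.2 hd)]

theorem exists_mem_unitaryGroup_pow_apply_eq (d : ℕ) (θ : Fin (d ^ 2) → ℝ) :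
    ∃ U ∈ Matrix.unitaryGroup (Fin (d ^ 2)) ℂ,
      ∀ l k, U l k ^ d = ((d : ℂ) ^ d)⁻¹ * Complex.exp (θ k * Complex.I) := by
  obtain rfl | hd := eq_or_ne d 0
  · exact ⟨1, one_mem _, fun l => l.elim0⟩
  have hζ := Complex.isPrimitiveRoot_exp d hd
  set W := ((√d : ℝ) : ℂ)⁻¹ • fourierMatrix (Complex.exp (2 * Real.pi * Complex.I / d)) d
    with hW_def
  have hW_unitary : W ∈ Matrix.unitaryGroup (Fin d) ℂ :=
    inv_sqrt_smul_fourierMatrix_mem_unitaryGroup hζ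
  have hW_pow : ∀ j k, W j k ^ d = ((√d : ℝ) : ℂ)⁻¹ ^ d := fun j k => by
    rw [hW_def, Matrix.smul_apply, fourierMatrix, Matrix.of_apply, smul_eq_mul, mul_pow,
      pow_right_comm, hζ.pow_eq_one, one_pow, mul_one]
  have hphase : ∀ t : ℝ,
      Complex.exp ((t / d : ℝ) * Complex.I) ^ d = Complex.exp (t * Complex.I) := fun t => by
    rw [← Complex.exp_nat_mul]
    push_cast
    field_simp
  let e : Fin (d ^ 2) ≃ Fin d × Fin d := (finCongr (sq d)).trans finProdFinEquiv.symm
  refine ⟨(W ⊗ₖ W).submatrix e e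
      * Matrix.diagonal fun k => Complex.exp ((θ k / d : ℝ) * Complex.I),
    mul_mem (Matrix.submatrix_equiv_mem_unitaryGroup
      (Matrix.kronecker_mem_unitary hW_unitary hW_unitary) e)
      (Matrix.diagonal_mem_unitaryGroup fun k => ?_), fun l k => ?_⟩
  · rw [RCLike.star_def, Complex.mul_conj', Complex.norm_exp_ofReal_mul_I, Complex.ofReal_one,
      one_pow]
  rw [Matrix.mul_diagonal, Matrix.submatrix_apply, Matrix.kroneckerMap_apply, mul_pow, mul_pow,
    hW_pow, hW_pow, hphase, ← mul_pow, ← mul_inv, ← Complex.ofReal_mul,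
    Real.mul_self_sqrt (Nat.cast_nonneg d), Complex.ofReal_natCast, inv_pow]

theorem inv_sqrt_pow_mul_inv_pow_rpow_two_div {d : ℕ} (hd : d ≠ 0) :
    ((√d ^ d)⁻¹ * ((d : ℝ) ^ d)⁻¹) ^ ((2 : ℝ) / d) = ((d : ℝ) ^ 3)⁻¹ := by
  have hd' : (d : ℝ) ≠ 0 := Nat.cast_ne_zero.2 hd
  rw [← mul_inv, ← mul_pow, Real.inv_rpow (by positivity), ← Real.rpow_natCast,
    ← Real.rpow_mul (by positivity), mul_div_cancel₀ _ hd', Real.rpow_two, mul_pow,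
    Real.sq_sqrt (Nat.cast_nonneg d)]
  ring

theorem exists_decomposition_equal_gConcurrence_general
    (d : ℕ) (hd : 1 ≤ d)
    (a : Fin (d ^ 2) → Matrix (Fin d) (Fin d) ℂ) (lam : Fin (d ^ 2) → ℝ)
    (hdiag : ∀ c, tauTensor d (d ^ 2) a (fun _ => c) = (lam c : ℂ))
    (hoff : ∀ k : Fin d → Fin (d ^ 2), (∃ i j, k i ≠ k j) → tauTensor d (d ^ 2) a k = 0)
    (theta : Fin (d ^ 2) → ℝ) :
    ∃ U : Matrix (Fin (d ^ 2)) (Fin (d ^ 2)) ℂ,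
      U ∈ Matrix.unitaryGroup (Fin (d ^ 2)) ℂ ∧
      ∀ l, (d : ℝ) * ‖(∑ k, U l k • a k).det‖ ^ ((2 : ℝ) / d)
          = (1 / (d : ℝ) ^ 2)
            * ‖∑ k, (lam k : ℂ) * Complex.exp ((theta k : ℂ) * Complex.I)‖
              ^ ((2 : ℝ) / d) := by
  have hd0 : d ≠ 0 := Nat.one_le_iff_ne_zero.1 hd
  obtain ⟨U, hU, hU_pow⟩ := exists_mem_unitaryGroup_pow_apply_eq d theta
  refine ⟨U, hU, fun l => ?_⟩
  have hdet : (∑ k, U l k • a k).det = ((√d ^ d : ℝ) : ℂ)⁻¹ * ((d : ℂ) ^ d)⁻¹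
      * ∑ k, (lam k : ℂ) * Complex.exp ((theta k : ℂ) * Complex.I) := by
    rw [det_sum_smul_eq_of_tauTensor_diagonal hd0 a _ hdiag hoff, mul_assoc]
    congr 1
    rw [Finset.mul_sum]
    refine Finset.sum_congr rfl fun k _ => ?_
    rw [hU_pow]
    ring
  rw [hdet, norm_mul, norm_mul, norm_inv, norm_inv, Complex.norm_real,
    Real.norm_of_nonneg (by positivity), norm_pow, Complex.norm_natCast,
    Real.mul_rpow (by positivity) (norm_nonneg _), inv_sqrt_pow_mul_inv_pow_rpow_two_div hd0,
    ← mul_assoc]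
  congr 1
  field_simp

/-- **Lemma 5.** If the τ-tensor of a family of `d²` coefficient matrices is diagonal with
nonnegative real entries `λ_k`, then for any phases `θ_k` there is a unitary change of
decomposition `b^{(l)} = ∑_k U_{lk} a^{(k)}` in which every member has the same
G-concurrence, namely `d |det b^{(l)}|^{2/d} = |∑_k λ_k e^{iθ_k}|^{2/d} / d²`. -/
theorem exists_decomposition_equal_gConcurrence
    (d : ℕ) (hd : 1 ≤ d)
    (a : Fin (d ^ 2) → Matrix (Fin d) (Fin d) ℂ) (lam : Fin (d ^ 2) → ℝ)
    (hlam : ∀ k, 0 ≤ lam k)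
    (hdiag : ∀ c, tauTensor d (d ^ 2) a (fun _ => c) = (lam c : ℂ))
    (hoff : ∀ k : Fin d → Fin (d ^ 2), (∃ i j, k i ≠ k j) → tauTensor d (d ^ 2) a k = 0)
    (theta : Fin (d ^ 2) → ℝ) :
    ∃ U : Matrix (Fin (d ^ 2)) (Fin (d ^ 2)) ℂ,
      U ∈ Matrix.unitaryGroup (Fin (d ^ 2)) ℂ ∧
      ∀ l, (d : ℝ) * ‖(∑ k, U l k • a k).det‖ ^ ((2 : ℝ) / d)
          = (1 / (d : ℝ) ^ 2)
            * ‖∑ k, (lam k : ℂ) * Complex.exp ((theta k : ℂ) * Complex.I)‖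
              ^ ((2 : ℝ) / d) :=
  exists_decomposition_equal_gConcurrence_general d hd a lam hdiag hoff theta
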